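/- (Randomization law of large numbers.) Let {a_{i,n}}_{i=1}^n be a triangular array of real constants and set ā_n := (1/n)∑_{i=1}^n a_{i,n}. If (1/n)∑_{i=1}^n a_{i,n}² = o(n), then |(1/n_{1,n})∑_{i : Z_{i,n} = 1} a_{i,n} − ā_n| → 0 in probability as n → ∞. -/

import Mathlib

open MeasureTheory ProbabilityTheory Filter Finset Real Set
open scoped ENNReal NNReal

noncomputable section

/-- Number of treated units in an assignment vector. -/
def ones {n : ℕ} (z : Fin n → Bool) : ℕ := (Finset.univ.filter fun i => z i = true).card

/-- Completely randomized design: `Z n` is uniform over the assignment vectors in `{0,1}^n`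
with exactly `n1 n` ones. -/
def IsCRD {Ω : Type} [MeasurableSpace Ω] (P : Measure Ω)
    (Z : (n : ℕ) → Ω → Fin n → Bool) (n1 : ℕ → ℕ) : Prop :=
  ∀ n, Measurable (Z n) ∧ P {ω | ones (Z n ω) = n1 n} = 1 ∧
    ∀ v w : Fin n → Bool, ones v = n1 n → ones w = n1 n →
      P {ω | Z n ω = v} = P {ω | Z n ω = w}

/-- Convergence to zero in probability for a sequence of (real-valued) random variables. -/
def TendstoInProb {Ω : Type} [MeasurableSpace Ω] (P : Measure Ω) (f : ℕ → Ω → ℝ) : Prop :=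
  ∀ ε : ℝ, 0 < ε → Tendsto (fun n => P {ω | ε ≤ |f n ω|}) atTop (nhds 0)

/-- Euclidean norm of a vector in `ℝ^d`. -/
def enorm2 {d : ℕ} (v : Fin d → ℝ) : ℝ := Real.sqrt (∑ j, (v j) ^ 2)

/-- Euclidean inner product on `ℝ^d`. -/
def dotp {d : ℕ} (θ v : Fin d → ℝ) : ℝ := ∑ j, θ j * v j

/-- The empirical `L²(Pₙ)` pseudo-distance `‖f - g‖ₙ` between two regression functions,
relative to the design points `x n 1, …, x n n`. -/
def distN {E : Type*} (x : (n : ℕ) → Fin n → E) (n : ℕ) (f g : E → ℝ) : ℝ :=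
  Real.sqrt ((n : ℝ)⁻¹ * ∑ i, (f (x n i) - g (x n i)) ^ 2)

/-- The `s`-covering number of a family `F` under a pseudo-distance `dst`. -/
def coveringNumber {α : Type*} (F : Set α) (dst : α → α → ℝ) (s : ℝ) : ℝ≥0∞ :=
  ⨅ (T : Finset α) (_ : ∀ f ∈ F, ∃ t ∈ T, dst f t ≤ s), (T.card : ℝ≥0∞)

/-- `√(log N)`, valued in `ℝ≥0∞` (it is `⊤` when the covering number is infinite). -/
def sqrtLog (N : ℝ≥0∞) : ℝ≥0∞ :=
  if N = ⊤ then ⊤ else ENNReal.ofReal (Real.sqrt (Real.log N.toReal))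

/-!
Under a completely randomized design the assignment is uniform on the vectors with `n₁` ones, so
the probability of a deviation `≥ ε` is a proportion of assignments, which Chebyshev's inequality
bounds by a second moment. By exchangeability the number of assignments treating both `i` and `j`
depends only on whether `i = j`; for centred values `bᵢ = aᵢ - āₙ`, which sum to zero, this gives
the sampling-without-replacement bound `E (∑_{treated} bᵢ)² ≤ (n₁ / n) ∑ bᵢ²`. Hence the deviation
probability is at most `∑ aᵢ² / (n₁ n ε²) ≤ ((1/n) ∑ aᵢ² / n) / (p_min ε²) → 0`.
-/

section UniformLaw

variable {Ω α : Type*} [MeasurableSpace Ω] [MeasurableSpace α] [MeasurableSingletonClass α]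
  {P : Measure Ω} [IsProbabilityMeasure P] {Z : Ω → α} {W : Finset α}

lemma measure_preimage_eq_card_div_of_uniform (hZ : Measurable Z) (hW : P (Z ⁻¹' W) = 1)
    (hunif : ∀ v ∈ W, ∀ w ∈ W, P (Z ⁻¹' {v}) = P (Z ⁻¹' {w}))
    (p : α → Prop) [DecidablePred p] :
    P {ω | p (Z ω)} = #(W.filter p) / #W := by
  obtain ⟨v₀, hv₀⟩ : W.Nonempty := by
    by_contra h
    simp [Finset.not_nonempty_iff_eq_empty.mp h] at hW
  have hatoms : ∀ F ⊆ W, P (Z ⁻¹' F) = #F * P (Z ⁻¹' {v₀}) := by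
    intro F hF
    rw [← Measure.map_apply hZ F.measurableSet, ← sum_measure_singleton,
      Finset.sum_congr rfl fun v hv => (Measure.map_apply hZ (measurableSet_singleton v)).trans
        (hunif v (hF hv) v₀ hv₀), Finset.sum_const, nsmul_eq_mul]
  have hinv : P (Z ⁻¹' {v₀}) = (#W : ℝ≥0∞)⁻¹ :=
    ENNReal.eq_inv_of_mul_eq_one_left (by rw [mul_comm, ← hatoms W subset_rfl, hW])
  have hnull : P (Z ⁻¹' W)ᶜ = 0 :=
    (prob_compl_eq_zero_iff (hZ W.measurableSet)).mpr hW
  rw [← measure_inter_conull hnull, div_eq_mul_inv, ← hinv, ← hatoms _ (filter_subset p W)]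
  congr 1
  ext ω
  simp [and_comm]

end UniformLaw

lemma card_filter_le_abs_mul_sq_le_sum_sq {ι : Type*} (s : Finset ι) (g : ι → ℝ) {ε : ℝ}
    (hε : 0 ≤ ε) : #(s.filter fun v => ε ≤ |g v|) * ε ^ 2 ≤ ∑ v ∈ s, g v ^ 2 := by
  calc #(s.filter fun v => ε ≤ |g v|) * ε ^ 2
      ≤ ∑ v ∈ s.filter fun v => ε ≤ |g v|, g v ^ 2 := by
        rw [← nsmul_eq_mul]
        refine card_nsmul_le_sum _ _ _ fun v hv => ?_
        rw [← sq_abs (g v)]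
        exact pow_le_pow_left₀ hε (mem_filter.mp hv).2 2
    _ ≤ ∑ v ∈ s, g v ^ 2 :=
        sum_le_sum_of_subset_of_nonneg (filter_subset _ _) fun v _ _ => sq_nonneg (g v)

lemma sum_sub_mean_eq_zero {ι : Type*} [Fintype ι] (a : ι → ℝ) :
    ∑ i, (a i - (∑ j, a j) / Fintype.card ι) = 0 := by
  rcases isEmpty_or_nonempty ι with h | h
  · simp
  · rw [sum_sub_distrib, sum_const, card_univ, nsmul_eq_mul,
      mul_div_cancel₀ _ (by positivity), sub_self]

lemma sum_sq_sub_mean_le {ι : Type*} [Fintype ι] (a : ι → ℝ) :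
    ∑ i, (a i - (∑ j, a j) / Fintype.card ι) ^ 2 ≤ ∑ i, a i ^ 2 := by
  set m := (∑ j, a j) / Fintype.card ι
  calc ∑ i, (a i - m) ^ 2
      ≤ ∑ i, (a i - m) ^ 2 + 2 * m * ∑ i, (a i - m) + ∑ _i : ι, m ^ 2 := by
        rw [sum_sub_mean_eq_zero a]
        simp only [mul_zero, add_zero, le_add_iff_nonneg_right]
        positivity
    _ = ∑ i, a i ^ 2 := by
        rw [mul_sum, ← sum_add_distrib, ← sum_add_distrib]
        exact sum_congr rfl fun i _ => by ring

def assignments (n k : ℕ) : Finset (Fin n → Bool) := univ.filter fun v => ones v = k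

def pairCount (n k : ℕ) (i j : Fin n) : ℕ :=
  #((assignments n k).filter fun v => v i = true ∧ v j = true)

lemma ones_comp_perm {n : ℕ} (v : Fin n → Bool) (σ : Equiv.Perm (Fin n)) :
    ones (v ∘ σ) = ones v := by
  simp only [ones, card_filter]
  exact Equiv.sum_comp σ fun i => if v i = true then 1 else 0

lemma pairCount_perm {n k : ℕ} (σ : Equiv.Perm (Fin n)) (i j : Fin n) :
    pairCount n k (σ i) (σ j) = pairCount n k i j := by
  refine card_nbij' (fun v => v ∘ σ) (fun v => v ∘ σ.symm) ?_ ?_ ?_ ?_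
  · intro v hv
    simp_all [assignments, ones_comp_perm]
  · intro v hv
    simp_all [assignments, ones_comp_perm]
  · intro v _
    ext; simp
  · intro v _
    ext; simp

lemma pairCount_eq_of_ne {n k : ℕ} {i j i' j' : Fin n} (hij : i ≠ j) (hij' : i' ≠ j') :
    pairCount n k i j = pairCount n k i' j' := by
  -- `τ` sends `i'` to `i`; a second swap, fixing `i`, then sends `τ j'` to `j`.
  set τ := Equiv.swap i' i
  have hτj' : τ j' ≠ i := fun h =>
    hij' (τ.injective (h.trans (Equiv.swap_apply_left i' i).symm)).symm
  have h := pairCount_perm (k := k) (τ.trans (Equiv.swap (τ j') j)) i' j'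
  rwa [Equiv.trans_apply, Equiv.trans_apply, Equiv.swap_apply_left, Equiv.swap_apply_left,
    Equiv.swap_apply_of_ne_of_ne hτj'.symm hij] at h

lemma pairCount_diag_eq {n k : ℕ} (i j : Fin n) : pairCount n k i i = pairCount n k j j := by
  simpa using pairCount_perm (k := k) (Equiv.swap i j) j j

lemma sum_pairCount_diag {n k : ℕ} : ∑ i, pairCount n k i i = #(assignments n k) * k := by
  simp only [pairCount, and_self, card_filter]
  rw [sum_comm, ← smul_eq_mul, ← sum_const]
  refine sum_congr rfl fun v hv => ?_
  rw [← card_filter]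
  exact (mem_filter.mp hv).2

lemma sum_sq_sum_filter_eq_sum_pairCount {n : ℕ} (k : ℕ) (b : Fin n → ℝ) :
    ∑ v ∈ assignments n k, (∑ i ∈ univ.filter (v · = true), b i) ^ 2
      = ∑ i, ∑ j, b i * b j * pairCount n k i j := by
  simp only [pairCount, sum_filter, sq, sum_mul_sum, card_filter, Nat.cast_sum]
  rw [sum_comm]
  refine sum_congr rfl fun i _ => ?_
  rw [sum_comm]
  refine sum_congr rfl fun j _ => ?_
  rw [mul_sum]
  refine sum_congr rfl fun v _ => ?_
  split_ifs <;> simp_all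

lemma sum_sq_sum_filter_le {n : ℕ} (k : ℕ) (b : Fin n → ℝ) (hb : ∑ i, b i = 0) :
    ∑ v ∈ assignments n k, (∑ i ∈ univ.filter (v · = true), b i) ^ 2
      ≤ #(assignments n k) * k / n * ∑ i, b i ^ 2 := by
  rw [sum_sq_sum_filter_eq_sum_pairCount]
  rcases lt_or_ge n 2 with hn | hn
  · have : Subsingleton (Fin n) := Fin.subsingleton_iff_le_one.mpr (by omega)
    have hb0 : ∀ i, b i = 0 := fun i => by rwa [Fintype.sum_subsingleton b i] at hb
    simp [hb0]
  let i₀ : Fin n := ⟨0, by omega⟩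
  let i₁ : Fin n := ⟨1, by omega⟩
  set d : ℝ := ↑(pairCount n k i₀ i₀)
  set o : ℝ := ↑(pairCount n k i₀ i₁)
  -- The off-diagonal count `o` only contributes `o * (∑ b)² = 0`.
  have hpair : ∀ i j, (pairCount n k i j : ℝ) = o + if i = j then d - o else 0 := by
    intro i j
    split_ifs with hij
    · rw [hij, pairCount_diag_eq j]; ring
    · rw [pairCount_eq_of_ne (i' := i₀) (j' := i₁) hij (by simp [i₀, i₁, Fin.ext_iff])]; ring
  have hd : (n : ℝ) * d = #(assignments n k) * k := by
    have h := congrArg (Nat.cast (R := ℝ)) (sum_pairCount_diag (n := n) (k := k))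
    rw [sum_congr rfl fun i _ => pairCount_diag_eq i i₀] at h
    simpa using h
  have ho : 0 ≤ o := Nat.cast_nonneg _
  calc ∑ i, ∑ j, b i * b j * (pairCount n k i j : ℝ) = (d - o) * ∑ i, b i ^ 2 := by
        simp only [hpair, mul_add, mul_ite, mul_zero, sum_add_distrib, sum_ite_eq,
          Finset.mem_univ, if_true, ← sum_mul, ← mul_sum, hb, zero_mul, zero_add,
          ← sq, mul_comm]
    _ ≤ d * ∑ i, b i ^ 2 := by gcongr; linarith
    _ = #(assignments n k) * k / n * ∑ i, b i ^ 2 := by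
        rw [eq_div_of_mul_eq (by positivity) ((mul_comm d n).trans hd)]

lemma measure_le_abs_treatedMean_sub_mean_le {Ω : Type*} [MeasurableSpace Ω] (P : Measure Ω)
    [IsProbabilityMeasure P] {n k : ℕ} (Z : Ω → Fin n → Bool) (hZ : Measurable Z)
    (hE : P {ω | ones (Z ω) = k} = 1)
    (hunif : ∀ v w : Fin n → Bool, ones v = k → ones w = k → P {ω | Z ω = v} = P {ω | Z ω = w})
    (hk : 0 < k) (a : Fin n → ℝ) {ε : ℝ} (hε : 0 < ε) :
    P {ω | ε ≤ |(k : ℝ)⁻¹ * ∑ i ∈ univ.filter (fun i => Z ω i = true), a i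
        - (n : ℝ)⁻¹ * ∑ i, a i|}
      ≤ ENNReal.ofReal ((∑ i, a i ^ 2) / (k * n * ε ^ 2)) := by
  set W := assignments n k
  set g : (Fin n → Bool) → ℝ := fun v =>
    (k : ℝ)⁻¹ * ∑ i ∈ univ.filter (v · = true), a i - (n : ℝ)⁻¹ * ∑ i, a i
  set b : Fin n → ℝ := fun i => a i - (∑ j, a j) / Fintype.card (Fin n)
  have hWZ : P (Z ⁻¹' W) = 1 := by
    convert hE using 2
    ext ω
    simp [W, assignments]
  have hW : 0 < #W :=
    card_pos.mpr <| Finset.nonempty_iff_ne_empty.mpr fun h => by simp [h] at hWZ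
  have hprob : P {ω | ε ≤ |g (Z ω)|} = #(W.filter fun v => ε ≤ |g v|) / #W :=
    measure_preimage_eq_card_div_of_uniform hZ hWZ
      (fun v hv w hw => hunif v w (mem_filter.mp hv).2 (mem_filter.mp hw).2) (fun v => ε ≤ |g v|)
  have hcenter : ∀ v ∈ W, g v = (k : ℝ)⁻¹ * ∑ i ∈ univ.filter (v · = true), b i := by
    intro v hv
    have hcard : #(univ.filter (v · = true)) = k := (mem_filter.mp hv).2
    simp only [g, b, sum_sub_distrib, sum_const, hcard, Fintype.card_fin, nsmul_eq_mul]
    field_simp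
  have hvar : ∑ v ∈ W, g v ^ 2 ≤ #W * ((∑ i, a i ^ 2) / (k * n)) := by
    calc ∑ v ∈ W, g v ^ 2
        = (k : ℝ)⁻¹ ^ 2 * ∑ v ∈ W, (∑ i ∈ univ.filter (v · = true), b i) ^ 2 := by
          rw [mul_sum]
          exact sum_congr rfl fun v hv => by rw [hcenter v hv, mul_pow]
      _ ≤ (k : ℝ)⁻¹ ^ 2 * (#W * k / n * ∑ i, a i ^ 2) := by
          gcongr
          exact (sum_sq_sum_filter_le k b (sum_sub_mean_eq_zero a)).trans
            (mul_le_mul_of_nonneg_left (sum_sq_sub_mean_le a) (by positivity))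
      _ = #W * ((∑ i, a i ^ 2) / (k * n)) := by
          field_simp
  have hcount := (card_filter_le_abs_mul_sq_le_sum_sq W g hε.le).trans hvar
  rw [hprob, ← ENNReal.ofReal_natCast, ← ENNReal.ofReal_natCast,
    ← ENNReal.ofReal_div_of_pos (by exact_mod_cast hW)]
  refine ENNReal.ofReal_le_ofReal ?_
  rw [div_le_iff₀ (by exact_mod_cast hW)]
  calc (#(W.filter fun v => ε ≤ |g v|) : ℝ) ≤ #W * ((∑ i, a i ^ 2) / (k * n)) / ε ^ 2 :=
        (le_div_iff₀ (by positivity)).mpr hcount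
    _ = (∑ i, a i ^ 2) / (k * n * ε ^ 2) * #W := by ring

theorem randomization_law_of_large_numbers_general
    {Ω : Type} [MeasurableSpace Ω] (P : Measure Ω) [IsProbabilityMeasure P]
    (Z : (n : ℕ) → Ω → Fin n → Bool) (n1 : ℕ → ℕ)
    (pmin pmax : ℝ) (hpmin : 0 < pmin)
    (hp : ∀ n : ℕ, 0 < n → pmin ≤ (n1 n : ℝ) / n ∧ (n1 n : ℝ) / n ≤ pmax)
    (hCRD : IsCRD P Z n1)
    (a : (n : ℕ) → Fin n → ℝ)
    (ha : Tendsto (fun n : ℕ => ((n : ℝ)⁻¹ * ∑ i, (a n i) ^ 2) / n) atTop (nhds 0)) :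
    TendstoInProb P (fun n ω =>
      (n1 n : ℝ)⁻¹ * ∑ i ∈ Finset.univ.filter (fun i => Z n ω i = true), a n i
        - (n : ℝ)⁻¹ * ∑ i, a n i) := by
  intro ε hε
  have hbound : Tendsto (fun n : ℕ =>
      ENNReal.ofReal ((pmin * ε ^ 2)⁻¹ * (((n : ℝ)⁻¹ * ∑ i, a n i ^ 2) / n))) atTop (nhds 0) := by
    simpa only [mul_zero, ENNReal.ofReal_zero] using
      ENNReal.tendsto_ofReal (ha.const_mul (pmin * ε ^ 2)⁻¹)
  refine tendsto_of_tendsto_of_tendsto_of_le_of_le' tendsto_const_nhds hbound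
    (Eventually.of_forall fun _ => zero_le) ?_
  filter_upwards [eventually_gt_atTop 0] with n hn
  obtain ⟨hZ, hE, hunif⟩ := hCRD n
  have hn1 : pmin * n ≤ n1 n := (le_div_iff₀ (by positivity)).mp (hp n hn).1
  have hn1_pos : 0 < n1 n := by exact_mod_cast (by positivity : 0 < pmin * n).trans_le hn1
  refine (measure_le_abs_treatedMean_sub_mean_le P (Z n) hZ hE hunif hn1_pos (a n) hε).trans
    (ENNReal.ofReal_le_ofReal ?_)
  calc (∑ i, a n i ^ 2) / (n1 n * n * ε ^ 2) ≤ (∑ i, a n i ^ 2) / (pmin * n * n * ε ^ 2) := by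
        gcongr
    _ = (pmin * ε ^ 2)⁻¹ * (((n : ℝ)⁻¹ * ∑ i, a n i ^ 2) / n) := by
        field_simp

/-- **Lemma (Randomization law of large numbers).**
If `(1/n)∑ aᵢₙ² = o(n)`, then the treated-arm average of the `aᵢₙ` converges in probability
to the population average `āₙ`. -/
theorem randomization_law_of_large_numbers
    {Ω : Type} [MeasurableSpace Ω] (P : Measure Ω) [IsProbabilityMeasure P]
    (Z : (n : ℕ) → Ω → Fin n → Bool) (n1 : ℕ → ℕ)
    (pmin pmax : ℝ) (hpmin : 0 < pmin) (hpmax : pmax < 1)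
    (hp : ∀ n : ℕ, 0 < n → pmin ≤ (n1 n : ℝ) / n ∧ (n1 n : ℝ) / n ≤ pmax)
    (hCRD : IsCRD P Z n1)
    (a : (n : ℕ) → Fin n → ℝ)
    (ha : Tendsto (fun n : ℕ => ((n : ℝ)⁻¹ * ∑ i, (a n i) ^ 2) / n) atTop (nhds 0)) :
    TendstoInProb P (fun n ω =>
      (n1 n : ℝ)⁻¹ * ∑ i ∈ Finset.univ.filter (fun i => Z n ω i = true), a n i
        - (n : ℝ)⁻¹ * ∑ i, a n i) :=
  randomization_law_of_large_numbers_general P Z n1 pmin pmax hpmin hp hCRD a ha
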